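/- There are exactly 16 quadruples (n, c, d, i) satisfying the Arieli–Avron–Zamansky non-deterministic truth tables whose induced logical equivalence relation satisfies, for all formulas A, B, the nine laws (1) A ∧ F ≡ F; (2) A ∨ T ≡ T; (3) A ∧ T ≡ A; (4) A ∨ F ≡ A; (5) A ∧ A ≡ A; (6) A ∨ A ≡ A; (7) A ∧ B ≡ B ∧ A; (8) A ∨ B ≡ B ∨ A; (9) ¬¬A ≡ A (with T := ¬F). -/

import Mathlib

/-- The three truth values: true, false, both-true-and-false. -/
inductive TV : Type
  | t : TV
  | f : TV
  | b : TV
  deriving DecidableEq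

/-- Formulas of LP^{→,F}: propositional variables, falsity constant,
    negation, conjunction, disjunction, implication. -/
inductive Fm : Type
  | var : ℕ → Fm
  | fls : Fm
  | neg : Fm → Fm
  | conj : Fm → Fm → Fm
  | disj : Fm → Fm → Fm
  | impl : Fm → Fm → Fm
  deriving DecidableEq

/-- The LP^{→,F} negation truth function. -/
def TV.negLP : TV → TV
  | .t => .f
  | .f => .t
  | .b => .b

/-- The LP^{→,F} conjunction truth function. -/
def TV.andLP : TV → TV → TV
  | .f, _ => .f
  | _, .f => .f
  | .t, .t => .t
  | _, _ => .b

/-- The LP^{→,F} disjunction truth function. -/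
def TV.orLP : TV → TV → TV
  | .t, _ => .t
  | _, .t => .t
  | .f, .f => .f
  | _, _ => .b

/-- The LP^{→,F} implication truth function: t if the antecedent is f,
    otherwise the value of the consequent. -/
def TV.implLP : TV → TV → TV
  | .f, _ => .t
  | _, y => y

/-- A valuation for LP^{→,F}. -/
def IsValuation (ν : Fm → TV) : Prop :=
  ν .fls = .f ∧
  (∀ A, ν (.neg A) = (ν A).negLP) ∧
  (∀ A B, ν (.conj A B) = (ν A).andLP (ν B)) ∧
  (∀ A B, ν (.disj A B) = (ν A).orLP (ν B)) ∧
  (∀ A B, ν (.impl A B) = (ν A).implLP (ν B))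

/-- Logical equivalence in LP^{→,F}. -/
def LEquiv (A B : Fm) : Prop := ∀ ν : Fm → TV, IsValuation ν → ν A = ν B

/-- The truth constant T, an abbreviation for ¬F. -/
def Fm.tru : Fm := .neg .fls

/-- A truth value is designated iff it is t or ⊤. -/
def Designated (v : TV) : Prop := v = .t ∨ v = .b

/-- Semantic logical consequence in LP^{→,F}. -/
def LPCons (Γ : Set Fm) (A : Fm) : Prop :=
  ∀ ν : Fm → TV, IsValuation ν → ((∃ B ∈ Γ, ν B = .f) ∨ Designated (ν A))

/-- Validity in LP^{→,F}. -/
def LPValid (A : Fm) : Prop := ∀ ν : Fm → TV, IsValuation ν → Designated (ν A)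

/-- A quadruple of truth functions on the three truth values. -/
structure Quad : Type where
  n : TV → TV
  c : TV → TV → TV
  d : TV → TV → TV
  i : TV → TV → TV

/-- The Arieli–Avron–Zamansky non-deterministic truth tables. -/
def AAZ (q : Quad) : Prop :=
  q.n .t = .f ∧ q.n .f = .t ∧ (q.n .b = .t ∨ q.n .b = .b) ∧
  (∀ y, q.c .f y = .f) ∧ (∀ x, q.c x .f = .f) ∧ q.c .t .t = .t ∧
  (q.c .t .b = .t ∨ q.c .t .b = .b) ∧
  (q.c .b .t = .t ∨ q.c .b .t = .b) ∧
  (q.c .b .b = .t ∨ q.c .b .b = .b) ∧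
  q.d .f .f = .f ∧ q.d .t .t = .t ∧ q.d .t .f = .t ∧ q.d .f .t = .t ∧
  (q.d .t .b = .t ∨ q.d .t .b = .b) ∧
  (q.d .b .t = .t ∨ q.d .b .t = .b) ∧
  (q.d .b .b = .t ∨ q.d .b .b = .b) ∧
  (q.d .b .f = .t ∨ q.d .b .f = .b) ∧
  (q.d .f .b = .t ∨ q.d .f .b = .b) ∧
  q.i .t .f = .f ∧ q.i .b .f = .f ∧
  q.i .f .f = .t ∧ q.i .f .t = .t ∧ q.i .t .t = .t ∧
  (q.i .f .b = .t ∨ q.i .f .b = .b) ∧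
  (q.i .t .b = .t ∨ q.i .t .b = .b) ∧
  (q.i .b .t = .t ∨ q.i .b .t = .b) ∧
  (q.i .b .b = .t ∨ q.i .b .b = .b)

/-- A valuation for the logic induced by the quadruple `q`. -/
def IsValuationQ (q : Quad) (ν : Fm → TV) : Prop :=
  ν .fls = .f ∧
  (∀ A, ν (.neg A) = q.n (ν A)) ∧
  (∀ A B, ν (.conj A B) = q.c (ν A) (ν B)) ∧
  (∀ A B, ν (.disj A B) = q.d (ν A) (ν B)) ∧
  (∀ A B, ν (.impl A B) = q.i (ν A) (ν B))

/-- Logical equivalence in the logic induced by the quadruple `q`. -/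
def LEquivQ (q : Quad) (A B : Fm) : Prop :=
  ∀ ν : Fm → TV, IsValuationQ q ν → ν A = ν B

/-- The quadruple of LP^{→,F}. -/
def lpQuad : Quad := ⟨TV.negLP, TV.andLP, TV.orLP, TV.implLP⟩

/-- Laws (1)–(9) for the logic induced by a quadruple. -/
def Laws9 (q : Quad) : Prop :=
  ∀ A B : Fm,
    LEquivQ q (A.conj .fls) .fls ∧
    LEquivQ q (A.disj Fm.tru) Fm.tru ∧
    LEquivQ q (A.conj Fm.tru) A ∧
    LEquivQ q (A.disj .fls) A ∧
    LEquivQ q (A.conj A) A ∧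
    LEquivQ q (A.disj A) A ∧
    LEquivQ q (A.conj B) (B.conj A) ∧
    LEquivQ q (A.disj B) (B.disj A) ∧
    LEquivQ q A.neg.neg A

/-!
Evaluating the laws under the valuation that sends every variable to ⊤ fixes all the
open entries of `n`, `c` and `d` to those of LP: for instance `¬¬A ≡ A` forces `n ⊤ = ⊤`,
since `n ⊤ = t` would give `n (n ⊤) = f`; and `A ∧ T ≡ A` together with commutativity
forces `c ⊤ t = c t ⊤ = ⊤`. Conversely LP's `¬, ∧, ∨` satisfy the laws. None of the laws
mentions `→`, so the four open entries of the implication table stay free, giving `2 ^ 4`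
quadruples.
-/

instance : Fintype TV := ⟨{.t, .f, .b}, by intro x; cases x <;> simp⟩

def evalQ (q : Quad) (σ : ℕ → TV) : Fm → TV
  | .var k => σ k
  | .fls => .f
  | .neg A => q.n (evalQ q σ A)
  | .conj A B => q.c (evalQ q σ A) (evalQ q σ B)
  | .disj A B => q.d (evalQ q σ A) (evalQ q σ B)
  | .impl A B => q.i (evalQ q σ A) (evalQ q σ B)

theorem isValuationQ_evalQ (q : Quad) (σ : ℕ → TV) : IsValuationQ q (evalQ q σ) :=
  ⟨rfl, fun _ => rfl, fun _ _ => rfl, fun _ _ => rfl, fun _ _ => rfl⟩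

theorem LEquivQ.evalQ_eq {q : Quad} {A B : Fm} (h : LEquivQ q A B) (σ : ℕ → TV) :
    evalQ q σ A = evalQ q σ B :=
  h _ (isValuationQ_evalQ q σ)

section Forced

variable {q : Quad}

theorem Quad.n_eq_negLP (hA : AAZ q) (hL : Laws9 q) : q.n = TV.negLP := by
  obtain ⟨hnt, hnf, hnb, -⟩ := hA
  have hnn : q.n (q.n .b) = .b := (hL (.var 0) (.var 0)).2.2.2.2.2.2.2.2.evalQ_eq fun _ => .b
  have hnb' : q.n .b = .b := by
    rcases hnb with h | h
    · simp [h, hnt] at hnn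
    · exact h
  funext x
  cases x <;> assumption

theorem Quad.c_eq_andLP (hA : AAZ q) (hL : Laws9 q) : q.c = TV.andLP := by
  obtain ⟨-, hnf, -, hcf, hcf', hctt, -⟩ := hA
  obtain ⟨-, -, hunit, -, hidem, -, hcomm, -, -⟩ := hL (.var 0) Fm.tru
  have hbt : q.c .b .t = .b := by simpa [evalQ, Fm.tru, hnf] using hunit.evalQ_eq fun _ => .b
  have htb : q.c .t .b = .b := by
    simpa [evalQ, Fm.tru, hnf, hbt] using (hcomm.evalQ_eq fun _ => .b).symm
  have hbb : q.c .b .b = .b := hidem.evalQ_eq fun _ => .b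
  funext x y
  cases x <;> cases y <;> simp [TV.andLP, hcf, hcf', hctt, hbt, htb, hbb]

theorem Quad.d_eq_orLP (hA : AAZ q) (hL : Laws9 q) : q.d = TV.orLP := by
  obtain ⟨-, hnf, -, -, -, -, -, -, -, hdff, hdtt, hdtf, hdft, -⟩ := hA
  obtain ⟨-, habs, -, -, -, hidem, -, hcommT, -⟩ := hL (.var 0) Fm.tru
  obtain ⟨-, -, -, hunit, -, -, -, hcommF, -⟩ := hL (.var 0) .fls
  have hbt : q.d .b .t = .t := by simpa [evalQ, Fm.tru, hnf] using habs.evalQ_eq fun _ => .b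
  have htb : q.d .t .b = .t := by
    simpa [evalQ, Fm.tru, hnf, hbt] using (hcommT.evalQ_eq fun _ => .b).symm
  have hbf : q.d .b .f = .b := hunit.evalQ_eq fun _ => .b
  have hfb : q.d .f .b = .b := by simpa [evalQ, hbf] using (hcommF.evalQ_eq fun _ => .b).symm
  have hbb : q.d .b .b = .b := hidem.evalQ_eq fun _ => .b
  funext x y
  cases x <;> cases y <;> simp [TV.orLP, hdff, hdtt, hdtf, hdft, hbt, htb, hbf, hfb, hbb]

end Forced

theorem laws9_lp (i : TV → TV → TV) : Laws9 ⟨TV.negLP, TV.andLP, TV.orLP, i⟩ := by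
  intro A B
  refine ⟨?_, ?_, ?_, ?_, ?_, ?_, ?_, ?_, ?_⟩ <;>
    rintro ν ⟨hf, hn, hc, hd, -⟩ <;>
    simp only [Fm.tru, hf, hn, hc, hd] <;>
    cases ν A <;> cases ν B <;> rfl

def TV.ofIsTop (x : Bool) : TV := if x then .b else .t

theorem TV.ofIsTop_beq_top (x : Bool) : (TV.ofIsTop x == .b) = x := by
  cases x <;> rfl

theorem TV.ofIsTop_eq_of_designated {v : TV} (hv : v = .t ∨ v = .b) :
    TV.ofIsTop (v == .b) = v := by
  rcases hv with rfl | rfl <;> rfl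

def implOfChoice (p : Bool × Bool × Bool × Bool) : TV → TV → TV
  | .t, .f => .f
  | .b, .f => .f
  | .f, .f => .t
  | .f, .t => .t
  | .t, .t => .t
  | .f, .b => TV.ofIsTop p.1
  | .t, .b => TV.ofIsTop p.2.1
  | .b, .t => TV.ofIsTop p.2.2.1
  | .b, .b => TV.ofIsTop p.2.2.2

def lpWithImpl (p : Bool × Bool × Bool × Bool) : Quad :=
  ⟨TV.negLP, TV.andLP, TV.orLP, implOfChoice p⟩

def Quad.implChoice (q : Quad) : Bool × Bool × Bool × Bool :=
  (q.i .f .b == .b, q.i .t .b == .b, q.i .b .t == .b, q.i .b .b == .b)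

theorem implChoice_lpWithImpl (p : Bool × Bool × Bool × Bool) :
    (lpWithImpl p).implChoice = p := by
  obtain ⟨a, b, c, d⟩ := p
  simp only [Quad.implChoice, lpWithImpl, implOfChoice, TV.ofIsTop_beq_top]

theorem lpWithImpl_injective : Function.Injective lpWithImpl :=
  Function.LeftInverse.injective implChoice_lpWithImpl

theorem aaz_lpWithImpl (p : Bool × Bool × Bool × Bool) : AAZ (lpWithImpl p) := by
  revert p
  unfold AAZ
  decide

theorem Quad.lpWithImpl_implChoice {q : Quad} (hA : AAZ q) (hL : Laws9 q) :
    lpWithImpl q.implChoice = q := by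
  have hn := q.n_eq_negLP hA hL
  have hc := q.c_eq_andLP hA hL
  have hd := q.d_eq_orLP hA hL
  obtain ⟨-, -, -, -, -, -, -, -, -, -, -, -, -, -, -, -, -, -, hitf, hibf, hiff, hift, hitt,
    hifb, hitb, hibt, hibb⟩ := hA
  obtain ⟨n, c, d, i⟩ := q
  subst hn hc hd
  dsimp only at hitf hibf hiff hift hitt hifb hitb hibt hibb
  have hi : implOfChoice (Quad.implChoice ⟨TV.negLP, TV.andLP, TV.orLP, i⟩) = i := by
    funext x y
    cases x <;> cases y <;>
      simp only [implOfChoice, Quad.implChoice, TV.ofIsTop_eq_of_designated, *]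
  rw [lpWithImpl, hi]

theorem setOf_aaz_and_laws9_eq_range :
    {q : Quad | AAZ q ∧ Laws9 q} = Set.range lpWithImpl := by
  ext q
  constructor
  · rintro ⟨hA, hL⟩
    exact ⟨q.implChoice, q.lpWithImpl_implChoice hA hL⟩
  · rintro ⟨p, rfl⟩
    exact ⟨aaz_lpWithImpl p, laws9_lp _⟩

/-- Exactly 16 quadruples satisfying the AAZ non-deterministic truth tables
    induce a logical equivalence relation satisfying laws (1)–(9). -/
theorem sixteen_quads_laws_1_to_9 :
    {q : Quad | AAZ q ∧ Laws9 q}.ncard = 16 := by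
  rw [setOf_aaz_and_laws9_eq_range, Set.ncard_range_of_injective lpWithImpl_injective]
  simp
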